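/- For metric (or coarse) spaces X and Y, the asymptotic dimension of the product satisfies asdim(X × Y) ≤ asdim X + asdim Y. -/
import Mathlib


open Metric Set

noncomputable section

/-- The word length of `g` with respect to a symmetrized generating set `S ∪ S⁻¹`. -/
noncomputable def wordLength {G : Type*} [Group G] (S : Set G) (g : G) : ℕ :=
  sInf {n : ℕ | ∃ l : List G, l.length = n ∧ (∀ x ∈ l, x ∈ S ∨ x⁻¹ ∈ S) ∧ l.prod = g}

/-- The word metric on a group with respect to a generating set `S`. -/
noncomputable def wordDist {G : Type*} [Group G] (S : Set G) (a b : G) : ℝ :=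
  (wordLength S (a⁻¹ * b) : ℝ)

/-- `AsdimLE d n` : the space with distance function `d` has asymptotic dimension at most `n`:
for every `D > 0` there are `B ≥ 0` and families `U 0, ..., U n` of subsets covering the space,
all of whose members have diameter at most `B`, and such that distinct members of the same
family are at mutual distance greater than `D`. -/
def AsdimLE {X : Type*} (d : X → X → ℝ) (n : ℕ) : Prop :=
  ∀ D : ℝ, 0 < D → ∃ B : ℝ, 0 ≤ B ∧ ∃ U : Fin (n + 1) → Set (Set X),
    (∀ x : X, ∃ i : Fin (n + 1), ∃ u ∈ U i, x ∈ u) ∧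
    (∀ i : Fin (n + 1), ∀ u ∈ U i, ∀ x ∈ u, ∀ y ∈ u, d x y ≤ B) ∧
    (∀ i : Fin (n + 1), ∀ u ∈ U i, ∀ v ∈ U i, u ≠ v → ∀ x ∈ u, ∀ y ∈ v, D < d x y)

/-- The asymptotic dimension of a space with distance function `d`, in `ℕ∞`. -/
noncomputable def asdimD {X : Type*} (d : X → X → ℝ) : ℕ∞ :=
  ⨅ (n : ℕ) (_ : AsdimLE d n), (n : ℕ∞)

/-- The asymptotic dimension of a pseudometric space. -/
noncomputable def asdim (X : Type*) [PseudoMetricSpace X] : ℕ∞ :=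
  asdimD (fun x y : X => dist x y)

open scoped Classical in
private noncomputable def gfun {X : Type*} [PseudoMetricSpace X] (S : Set (Set X)) (t : ℝ) (x : X) : ℝ :=
  if (⋃₀ S).Nonempty then max 0 (t - infDist x (⋃₀ S)) else 0

private lemma gfun_nonneg {X : Type*} [PseudoMetricSpace X] (S : Set (Set X)) (t : ℝ) (x : X) :
    0 ≤ gfun S t x := by
  unfold gfun; split
  · exact le_max_left _ _
  · exact le_refl _

private lemma gfun_le {X : Type*} [PseudoMetricSpace X] (S : Set (Set X)) {t : ℝ} (ht : 0 ≤ t)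
    (x : X) : gfun S t x ≤ t := by
  unfold gfun; split
  · exact max_le ht (by linarith [infDist_nonneg (x := x) (s := ⋃₀ S)])
  · exact ht

private lemma gfun_lip {X : Type*} [PseudoMetricSpace X] (S : Set (Set X)) (t : ℝ) (x x' : X) :
    gfun S t x - gfun S t x' ≤ dist x x' := by
  unfold gfun; split
  · have h : infDist x' (⋃₀ S) ≤ infDist x (⋃₀ S) + dist x' x :=
      infDist_le_infDist_add_dist
    rw [dist_comm x' x] at h
    have h2 : t - infDist x (⋃₀ S) ≤ (t - infDist x' (⋃₀ S)) + dist x x' := by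
      linarith
    have : max 0 (t - infDist x (⋃₀ S)) ≤ max 0 (t - infDist x' (⋃₀ S)) + dist x x' :=
      max_le (by positivity) (h2.trans (by linarith [le_max_right (0:ℝ) (t - infDist x' (⋃₀ S))]))
    linarith
  · simpa using dist_nonneg

private lemma gfun_pos {X : Type*} [PseudoMetricSpace X] {S : Set (Set X)} {t : ℝ} {x : X}
    (h : 0 < gfun S t x) : ∃ u ∈ S, infDist x u < t ∧ u.Nonempty := by
  unfold gfun at h; split at h
  · rename_i hne
    have hlt : infDist x (⋃₀ S) < t := by
      by_contra hc; push_neg at hc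
      rw [max_eq_left (by linarith)] at h; exact lt_irrefl _ h
    obtain ⟨p, hp, hdp⟩ := (infDist_lt_iff hne).mp hlt
    obtain ⟨u, huS, hpu⟩ := hp
    exact ⟨u, huS, lt_of_le_of_lt (infDist_le_dist_of_mem hpu) hdp, ⟨p, hpu⟩⟩
  · exact absurd h (lt_irrefl 0)

private lemma gfun_mem {X : Type*} [PseudoMetricSpace X] {S : Set (Set X)} {t : ℝ} {x : X}
    {u : Set X} (hxu : x ∈ u) (huS : u ∈ S) : t ≤ gfun S t x := by
  have hmem : x ∈ ⋃₀ S := ⟨u, huS, hxu⟩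
  unfold gfun
  rw [if_pos ⟨x, hmem⟩, infDist_zero_of_mem hmem]
  simpa using le_max_right (0:ℝ) t

private noncomputable def Nfun {X : Type*} [PseudoMetricSpace X] (S : ℕ → Set (Set X)) (t : ℝ)
    (i : ℕ) (x : X) : ℝ := ∑ i' ∈ Finset.range i, gfun (S i') t x

private lemma Nfun_nonneg {X : Type*} [PseudoMetricSpace X] (S : ℕ → Set (Set X)) (t : ℝ)
    (i : ℕ) (x : X) : 0 ≤ Nfun S t i x :=
  Finset.sum_nonneg fun _ _ => gfun_nonneg _ _ _

private lemma Nfun_mono {X : Type*} [PseudoMetricSpace X] (S : ℕ → Set (Set X)) (t : ℝ)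
    {i i' : ℕ} (h : i ≤ i') (x : X) : Nfun S t i x ≤ Nfun S t i' x :=
  Finset.sum_le_sum_of_subset_of_nonneg (Finset.range_subset_range.mpr h)
    (fun _ _ _ => gfun_nonneg _ _ _)

private lemma Nfun_lip {X : Type*} [PseudoMetricSpace X] (S : ℕ → Set (Set X)) (t : ℝ)
    (i : ℕ) (x x' : X) : Nfun S t i x - Nfun S t i x' ≤ (i : ℝ) * dist x x' := by
  unfold Nfun
  rw [← Finset.sum_sub_distrib]
  calc ∑ i' ∈ Finset.range i, (gfun (S i') t x - gfun (S i') t x')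
      ≤ ∑ _i' ∈ Finset.range i, dist x x' :=
        Finset.sum_le_sum fun i' _ => gfun_lip _ _ _ _
    _ = (i : ℝ) * dist x x' := by simp [mul_comm]

private lemma exists_gap (c : ℕ → ℝ) (k : ℕ) (ε : ℝ) (hk : 0 < k)
    (h : (k : ℝ) * ε ≤ c k - c 0) : ∃ i < k, ε ≤ c (i + 1) - c i := by
  by_contra hA
  push_neg at hA
  have hlt : ∑ i ∈ Finset.range k, (c (i + 1) - c i) < ∑ _i ∈ Finset.range k, ε :=
    Finset.sum_lt_sum_of_nonempty (Finset.nonempty_range_iff.mpr hk.ne') fun i hi => hA i (Finset.mem_range.mp hi)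
  rw [Finset.sum_range_sub] at hlt
  rw [Finset.sum_const, Finset.card_range, nsmul_eq_mul] at hlt
  linarith

private lemma clip_lemma (A A' B B' : ℝ) (hA : A ≤ A') (hB : B ≤ B') :
    min A' (max A B') - min A' (max A B) ≤ max 0 (min A' B' - max A B) := by
  simp only [min_def, max_def]
  split_ifs <;> linarith

private lemma div_lip {a a' b b' t c : ℝ} (ht : 0 < t) (ha : t ≤ a) (ha' : t ≤ a')
    (hb0' : 0 ≤ b') (hba' : b' ≤ a') (hc : 0 ≤ c)
    (h1 : b - b' ≤ c) (h2 : a' - a ≤ c) : b / a - b' / a' ≤ 2 * c / t := by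
  have hpa : 0 < a := lt_of_lt_of_le ht ha
  have hpa' : 0 < a' := lt_of_lt_of_le ht ha'
  rw [div_sub_div _ _ hpa.ne' hpa'.ne', div_le_div_iff₀ (by positivity) ht]
  have h3 : b * a' - a * b' ≤ 2 * c * a' := by
    nlinarith [mul_le_mul_of_nonneg_right h1 hpa'.le, mul_le_mul_of_nonneg_left h2 hb0',
      mul_le_mul_of_nonneg_right hba' hc]
  have h4 : 0 ≤ 2 * c * a' := by positivity
  nlinarith [mul_le_mul_of_nonneg_right h3 ht.le, mul_le_mul_of_nonneg_left ha h4]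

private lemma fam_pack {X : Type*} [PseudoMetricSpace X] {n : ℕ} {E BX : ℝ}
    (U : Fin (n + 1) → Set (Set X))
    (hUcov : ∀ x : X, ∃ i : Fin (n + 1), ∃ u ∈ U i, x ∈ u)
    (hUdiam : ∀ i : Fin (n + 1), ∀ u ∈ U i, ∀ x ∈ u, ∀ y ∈ u, dist x y ≤ BX)
    (hUsep : ∀ i : Fin (n + 1), ∀ u ∈ U i, ∀ v ∈ U i, u ≠ v → ∀ x ∈ u, ∀ y ∈ v, E < dist x y) :
    ∃ SU : ℕ → Set (Set X),
      (∀ i u, u ∈ SU i → u.Nonempty) ∧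
      (∀ i u, u ∈ SU i → ∀ x ∈ u, ∀ x' ∈ u, dist x x' ≤ BX) ∧
      (∀ i u u', u ∈ SU i → u' ∈ SU i → u ≠ u' → ∀ p ∈ u, ∀ q ∈ u', E < dist p q) ∧
      (∀ x, ∃ i < n + 1, ∃ u ∈ SU i, x ∈ u) ∧
      (∀ i u, u ∈ SU i → i < n + 1) := by
  refine ⟨fun i => if h : i < n + 1 then {u | u ∈ U ⟨i, h⟩ ∧ u.Nonempty} else ∅,
    ?_, ?_, ?_, ?_, ?_⟩
  · intro i u hu
    by_cases h : i < n + 1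
    · simp only [dif_pos h, mem_setOf_eq] at hu; exact hu.2
    · simp only [dif_neg h] at hu; exact absurd hu (notMem_empty u)
  · intro i u hu
    by_cases h : i < n + 1
    · simp only [dif_pos h, mem_setOf_eq] at hu; exact hUdiam ⟨i, h⟩ u hu.1
    · simp only [dif_neg h] at hu; exact absurd hu (notMem_empty u)
  · intro i u u' hu hu' hne
    by_cases h : i < n + 1
    · simp only [dif_pos h, mem_setOf_eq] at hu hu'; exact hUsep ⟨i, h⟩ u hu.1 u' hu'.1 hne
    · simp only [dif_neg h] at hu; exact absurd hu (notMem_empty u)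
  · intro x
    obtain ⟨i, u, hu, hx⟩ := hUcov x
    refine ⟨i.1, i.2, u, ?_, hx⟩
    simp only [dif_pos i.2, mem_setOf_eq]
    exact ⟨by simpa using hu, ⟨x, hx⟩⟩
  · intro i u hu
    by_contra h
    simp only [dif_neg h] at hu; exact absurd hu (notMem_empty u)

set_option maxHeartbeats 2000000 in
private lemma asdimLE_prod {X Y : Type*} [PseudoMetricSpace X] [PseudoMetricSpace Y] {n m : ℕ}
    (hX : AsdimLE (fun a b : X => dist a b) n) (hY : AsdimLE (fun a b : Y => dist a b) m) :
    AsdimLE (fun p q : X × Y => dist p q) (n + m) := by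
  intro D hD
  have hn1 : (0:ℝ) < (n:ℝ) + 1 := by positivity
  have hm1 : (0:ℝ) < (m:ℝ) + 1 := by positivity
  set t : ℝ := 100 * ((n:ℝ) + 1) ^ 2 * ((m:ℝ) + 1) ^ 2 * D with ht_def
  have ht : 0 < t := by positivity
  obtain ⟨BX, hBX0, U, hUcov, hUdiam, hUsep⟩ := hX (2 * t + D) (by positivity)
  obtain ⟨BY, hBY0, V, hVcov, hVdiam, hVsep⟩ := hY (2 * t + D) (by positivity)
  obtain ⟨SU, hSUne, hSUdiam, hSUsep, hSUcov, hSUlt⟩ := fam_pack U hUcov hUdiam hUsep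
  obtain ⟨SV, hSVne, hSVdiam, hSVsep, hSVcov, hSVlt⟩ := fam_pack V hVcov hVdiam hVsep
  -- the X-side machinery
  set Phi : ℕ → X → ℝ := fun i x => Nfun SU t i x / Nfun SU t (n + 1) x with hPhi_def
  set Psi : ℕ → Y → ℝ := fun j y => Nfun SV t j y / Nfun SV t (m + 1) y with hPsi_def
  have hGX : ∀ x, t ≤ Nfun SU t (n + 1) x := by
    intro x
    obtain ⟨i, hi, u, hu, hx⟩ := hSUcov x
    calc t ≤ gfun (SU i) t x := gfun_mem hx hu
      _ ≤ Nfun SU t (n + 1) x := by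
        apply Finset.single_le_sum (f := fun i' => gfun (SU i') t x)
          (fun _ _ => gfun_nonneg _ _ _) (Finset.mem_range.mpr hi)
  have hGY : ∀ y, t ≤ Nfun SV t (m + 1) y := by
    intro y
    obtain ⟨j, hj, v, hv, hy⟩ := hSVcov y
    calc t ≤ gfun (SV j) t y := gfun_mem hy hv
      _ ≤ Nfun SV t (m + 1) y := by
        apply Finset.single_le_sum (f := fun j' => gfun (SV j') t y)
          (fun _ _ => gfun_nonneg _ _ _) (Finset.mem_range.mpr hj)
  have hPhi_mono : ∀ {i i' : ℕ}, i ≤ i' → ∀ x, Phi i x ≤ Phi i' x := by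
    intro i i' h x
    have hG : (0:ℝ) < Nfun SU t (n + 1) x := lt_of_lt_of_le ht (hGX x)
    simp only [hPhi_def, div_eq_mul_inv]
    exact mul_le_mul_of_nonneg_right (Nfun_mono SU t h x) (inv_nonneg.mpr hG.le)
  have hPsi_mono : ∀ {j j' : ℕ}, j ≤ j' → ∀ y, Psi j y ≤ Psi j' y := by
    intro j j' h y
    have hG : (0:ℝ) < Nfun SV t (m + 1) y := lt_of_lt_of_le ht (hGY y)
    simp only [hPsi_def, div_eq_mul_inv]
    exact mul_le_mul_of_nonneg_right (Nfun_mono SV t h y) (inv_nonneg.mpr hG.le)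
  have hPhi_nn : ∀ i x, 0 ≤ Phi i x := fun i x => by
    simp only [hPhi_def]
    exact div_nonneg (Nfun_nonneg _ _ _ _) (le_trans ht.le (hGX x))
  have hPsi_nn : ∀ j y, 0 ≤ Psi j y := fun j y => by
    simp only [hPsi_def]
    exact div_nonneg (Nfun_nonneg _ _ _ _) (le_trans ht.le (hGY y))
  have hPhi_le1 : ∀ i x, Phi i x ≤ 1 := fun i x => by
    simp only [hPhi_def]
    rcases le_or_gt i (n + 1) with h | h
    · exact div_le_one_of_le₀ (Nfun_mono SU t h x) (le_trans ht.le (hGX x))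
    · have : Nfun SU t i x = Nfun SU t (n + 1) x := by
        unfold Nfun
        refine (Finset.sum_subset (Finset.range_subset_range.mpr h.le) ?_).symm
        intro i' _ hi'
        have hlt : ¬ i' < n + 1 := by
          intro hc
          exact hi' (Finset.mem_range.mpr hc)
        rcases eq_or_ne (gfun (SU i') t x) 0 with h0 | h0
        · exact h0
        · obtain ⟨u, hu, -⟩ := gfun_pos (lt_of_le_of_ne (gfun_nonneg _ _ _) (Ne.symm h0))
          exact absurd (hSUlt i' u hu) hlt
      rw [this]
      exact div_le_one_of_le₀ le_rfl (le_trans ht.le (hGX x))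
  have hPsi_le1 : ∀ j y, Psi j y ≤ 1 := fun j y => by
    simp only [hPsi_def]
    rcases le_or_gt j (m + 1) with h | h
    · exact div_le_one_of_le₀ (Nfun_mono SV t h y) (le_trans ht.le (hGY y))
    · have : Nfun SV t j y = Nfun SV t (m + 1) y := by
        unfold Nfun
        refine (Finset.sum_subset (Finset.range_subset_range.mpr h.le) ?_).symm
        intro j' _ hj'
        have hlt : ¬ j' < m + 1 := by
          intro hc
          exact hj' (Finset.mem_range.mpr hc)
        rcases eq_or_ne (gfun (SV j') t y) 0 with h0 | h0
        · exact h0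
        · obtain ⟨v, hv, -⟩ := gfun_pos (lt_of_le_of_ne (gfun_nonneg _ _ _) (Ne.symm h0))
          exact absurd (hSVlt j' v hv) hlt
      rw [this]
      exact div_le_one_of_le₀ le_rfl (le_trans ht.le (hGY y))
  have hPhi_zero : ∀ x, Phi 0 x = 0 := fun x => by
    simp only [hPhi_def]
    unfold Nfun
    simp
  have hPsi_zero : ∀ y, Psi 0 y = 0 := fun y => by
    simp only [hPsi_def]
    unfold Nfun
    simp
  have hPhi_one : ∀ x, Phi (n + 1) x = 1 := fun x => by
    simp only [hPhi_def]
    exact div_self (ne_of_gt (lt_of_lt_of_le ht (hGX x)))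
  have hPsi_one : ∀ y, Psi (m + 1) y = 1 := fun y => by
    simp only [hPsi_def]
    exact div_self (ne_of_gt (lt_of_lt_of_le ht (hGY y)))
  set EX : ℝ := 2 * (((n:ℝ) + 1) * D) / t with hEX_def
  set EY : ℝ := 2 * (((m:ℝ) + 1) * D) / t with hEY_def
  have hEX0 : 0 ≤ EX := by rw [hEX_def]; positivity
  have hEY0 : 0 ≤ EY := by rw [hEY_def]; positivity
  have hPhi_lip : ∀ i x x', i ≤ n + 1 → dist x x' ≤ D → Phi i x - Phi i x' ≤ EX := by
    intro i x x' hi hd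
    simp only [hPhi_def, hEX_def]
    have hc : (0:ℝ) ≤ ((n:ℝ) + 1) * D := by positivity
    apply div_lip ht (hGX x) (hGX x') (Nfun_nonneg _ _ _ _) (Nfun_mono SU t hi x') hc
    · have h5 := Nfun_lip SU t i x x'
      have h6 : (i:ℝ) * dist x x' ≤ ((n:ℝ) + 1) * D := by
        apply mul_le_mul _ hd dist_nonneg (by positivity)
        exact_mod_cast hi
      linarith
    · have h5 := Nfun_lip SU t (n + 1) x' x
      push_cast at h5
      have h6 : ((n:ℝ) + 1) * dist x' x ≤ ((n:ℝ) + 1) * D := by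
        rw [dist_comm]
        exact mul_le_mul_of_nonneg_left hd (by positivity)
      linarith
  have hPsi_lip : ∀ j y y', j ≤ m + 1 → dist y y' ≤ D → Psi j y - Psi j y' ≤ EY := by
    intro j y y' hj hd
    simp only [hPsi_def, hEY_def]
    have hc : (0:ℝ) ≤ ((m:ℝ) + 1) * D := by positivity
    apply div_lip ht (hGY y) (hGY y') (Nfun_nonneg _ _ _ _) (Nfun_mono SV t hj y') hc
    · have h5 := Nfun_lip SV t j y y'
      have h6 : (j:ℝ) * dist y y' ≤ ((m:ℝ) + 1) * D := by
        apply mul_le_mul _ hd dist_nonneg (by positivity)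
        exact_mod_cast hj
      linarith
    · have h5 := Nfun_lip SV t (m + 1) y' y
      push_cast at h5
      have h6 : ((m:ℝ) + 1) * dist y' y ≤ ((m:ℝ) + 1) * D := by
        rw [dist_comm]
        exact mul_le_mul_of_nonneg_left hd (by positivity)
      linarith
  set del : ℝ := 1 / (2 * ((n:ℝ) + 1) * ((m:ℝ) + 1)) with hdel_def
  have hdel : 0 < del := by rw [hdel_def]; positivity
  have hEdel : 2 * (EX + EY) ≤ del := by
    have hrw : 2 * (EX + EY) = (4 * ((n:ℝ) + 1) * D + 4 * ((m:ℝ) + 1) * D) / t := by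
      rw [hEX_def, hEY_def]
      field_simp
      ring
    rw [hrw, hdel_def, ht_def, div_le_div_iff₀ (by positivity) (by positivity)]
    have ha : (1:ℝ) ≤ (n:ℝ) + 1 := by simp
    have hb : (1:ℝ) ≤ (m:ℝ) + 1 := by simp
    have h1 : 8 * ((n:ℝ)+1)^2 * ((m:ℝ)+1) * D ≤ 8 * ((n:ℝ)+1)^2 * ((m:ℝ)+1)^2 * D := by
      nlinarith [mul_nonneg (by positivity : (0:ℝ) ≤ 8 * ((n:ℝ)+1)^2 * ((m:ℝ)+1) * D)
        (by linarith : (0:ℝ) ≤ (m:ℝ) + 1 - 1)]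
    have h2 : 8 * ((n:ℝ)+1) * ((m:ℝ)+1)^2 * D ≤ 8 * ((n:ℝ)+1)^2 * ((m:ℝ)+1)^2 * D := by
      nlinarith [mul_nonneg (by positivity : (0:ℝ) ≤ 8 * ((n:ℝ)+1) * ((m:ℝ)+1)^2 * D)
        (by linarith : (0:ℝ) ≤ (n:ℝ) + 1 - 1)]
    have h3 : (0:ℝ) ≤ 100 * ((n:ℝ)+1)^2 * ((m:ℝ)+1)^2 * D := by positivity
    nlinarith [h1, h2, h3]
  set beta : ℕ → ℕ → X → Y → ℝ := fun i j x y =>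
    max 0 (min (Phi (i + 1) x) (Psi (j + 1) y) - max (Phi i x) (Psi j y)) with hbeta_def
  set W : Fin (n + m + 1) → Set (Set (X × Y)) := fun k =>
    {s | ∃ i j u v, i + j = (k : ℕ) ∧ u ∈ SU i ∧ v ∈ SV j ∧
      s = {p : X × Y | infDist p.1 u < t ∧ infDist p.2 v < t ∧ del < beta i j p.1 p.2}}
    with hW_def
  clear_value t Phi Psi EX EY del beta W
  refine ⟨2 * t + max BX BY, by positivity, W, ?_, ?_, ?_⟩
  · -- cover
    rintro ⟨x, y⟩
    obtain ⟨i, hi, hgapX⟩ := exists_gap (fun i => Phi i x) (n + 1) (1 / ((n:ℝ) + 1))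
      (Nat.succ_pos n) (by
        simp only [hPhi_one x, hPhi_zero x]
        push_cast
        rw [mul_one_div, div_self (ne_of_gt hn1)]
        norm_num)
    have hgapX : 1 / ((n:ℝ) + 1) ≤ Phi (i + 1) x - Phi i x := hgapX
    set c : ℕ → ℝ := fun j => min (Phi (i + 1) x) (max (Phi i x) (Psi j y)) with hc_def
    have hc0 : c 0 = Phi i x := by
      simp only [hc_def, hPsi_zero y]
      rw [max_eq_left (hPhi_nn i x), min_eq_right (hPhi_mono (Nat.le_succ i) x)]
    have hcm : c (m + 1) = Phi (i + 1) x := by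
      simp only [hc_def, hPsi_one y]
      rw [max_eq_right (hPhi_le1 i x), min_eq_left (hPhi_le1 (i + 1) x)]
    obtain ⟨j, hj, hgapY⟩ := exists_gap c (m + 1) (1 / (((n:ℝ) + 1) * ((m:ℝ) + 1)))
      (Nat.succ_pos m) (by
        rw [hc0, hcm]
        have hsimp : ((m + 1 : ℕ) : ℝ) * (1 / (((n:ℝ) + 1) * ((m:ℝ) + 1))) = 1 / ((n:ℝ) + 1) := by
          rw [mul_one_div, div_eq_div_iff (by positivity) (by positivity)]
          push_cast
          ring
        rw [hsimp]
        exact hgapX)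
    have hBle : 1 / (((n:ℝ) + 1) * ((m:ℝ) + 1)) ≤ beta i j x y := by
      have hclip := clip_lemma (Phi i x) (Phi (i + 1) x) (Psi j y) (Psi (j + 1) y)
        (hPhi_mono (Nat.le_succ i) x) (hPsi_mono (Nat.le_succ j) y)
      simp only [hbeta_def]
      simp only [hc_def] at hgapY
      linarith
    have hbeta_gt : del < beta i j x y := by
      have hstep : del < 1 / (((n:ℝ) + 1) * ((m:ℝ) + 1)) := by
        rw [hdel_def, div_lt_div_iff₀ (by positivity) (by positivity)]
        nlinarith [mul_pos hn1 hm1]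
      linarith
    have hposX : 0 < gfun (SU i) t x := by
      have hgap0 : 0 < Phi (i + 1) x - Phi i x := lt_of_lt_of_le (by positivity) hgapX
      by_contra hng
      push_neg at hng
      have hg0 : gfun (SU i) t x = 0 := le_antisymm hng (gfun_nonneg _ _ _)
      have heq : Nfun SU t (i + 1) x = Nfun SU t i x := by
        unfold Nfun
        rw [Finset.sum_range_succ, hg0, add_zero]
      simp only [hPhi_def] at hgap0
      rw [heq] at hgap0
      linarith
    obtain ⟨u, huSU, hudist, -⟩ := gfun_pos hposX
    have hposY : 0 < gfun (SV j) t y := by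
      have hgap0 : 0 < Psi (j + 1) y - Psi j y := by
        by_contra hng
        push_neg at hng
        have heq : Psi (j + 1) y = Psi j y :=
          le_antisymm (by linarith) (hPsi_mono (Nat.le_succ j) y)
        have hcc : c (j + 1) = c j := by simp only [hc_def, heq]
        rw [hcc] at hgapY
        have hgappos : (0:ℝ) < 1 / (((n:ℝ) + 1) * ((m:ℝ) + 1)) := by positivity
        linarith
      by_contra hng
      push_neg at hng
      have hg0 : gfun (SV j) t y = 0 := le_antisymm hng (gfun_nonneg _ _ _)
      have heq : Nfun SV t (j + 1) y = Nfun SV t j y := by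
        unfold Nfun
        rw [Finset.sum_range_succ, hg0, add_zero]
      simp only [hPsi_def] at hgap0
      rw [heq] at hgap0
      linarith
    obtain ⟨v, hvSV, hvdist, -⟩ := gfun_pos hposY
    refine ⟨⟨i + j, by omega⟩,
      {p : X × Y | infDist p.1 u < t ∧ infDist p.2 v < t ∧ del < beta i j p.1 p.2}, ?_, ?_⟩
    · simp only [hW_def, mem_setOf_eq]
      exact ⟨i, j, u, v, rfl, huSU, hvSV, rfl⟩
    · exact ⟨hudist, hvdist, hbeta_gt⟩
  · -- diameter
    rintro k s hs p hp q hq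
    simp only [hW_def, mem_setOf_eq] at hs
    obtain ⟨i, j, u, v, hsum, hu, hv, rfl⟩ := hs
    obtain ⟨hpu, hpv, -⟩ := hp
    obtain ⟨hqu, hqv, -⟩ := hq
    obtain ⟨pu, hpum, hpud⟩ := (infDist_lt_iff (hSUne i u hu)).mp hpu
    obtain ⟨qu, hqum, hqud⟩ := (infDist_lt_iff (hSUne i u hu)).mp hqu
    obtain ⟨pv, hpvm, hpvd⟩ := (infDist_lt_iff (hSVne j v hv)).mp hpv
    obtain ⟨qv, hqvm, hqvd⟩ := (infDist_lt_iff (hSVne j v hv)).mp hqv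
    have hdx : dist p.1 q.1 ≤ 2 * t + BX := by
      have h6 := hSUdiam i u hu pu hpum qu hqum
      have h5 := dist_triangle4 p.1 pu qu q.1
      have h7 : dist qu q.1 = dist q.1 qu := dist_comm _ _
      linarith
    have hdy : dist p.2 q.2 ≤ 2 * t + BY := by
      have h6 := hSVdiam j v hv pv hpvm qv hqvm
      have h5 := dist_triangle4 p.2 pv qv q.2
      have h7 : dist qv q.2 = dist q.2 qv := dist_comm _ _
      linarith
    show dist p q ≤ 2 * t + max BX BY
    rw [Prod.dist_eq]
    apply max_le
    · exact hdx.trans (by linarith [le_max_left BX BY])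
    · exact hdy.trans (by linarith [le_max_right BX BY])
  · -- separation
    rintro k s hs s' hs' hne p hp q hq
    simp only [hW_def, mem_setOf_eq] at hs hs'
    obtain ⟨i, j, u, v, hsum, hu, hv, rfl⟩ := hs
    obtain ⟨i', j', u', v', hsum', hu', hv', rfl⟩ := hs'
    obtain ⟨hpu, hpv, hpb⟩ := hp
    obtain ⟨hqu, hqv, hqb⟩ := hq
    by_contra hcon
    push_neg at hcon
    have hdx : dist p.1 q.1 ≤ D := le_trans (by rw [Prod.dist_eq]; exact le_max_left _ _) hcon
    have hdy : dist p.2 q.2 ≤ D := le_trans (by rw [Prod.dist_eq]; exact le_max_right _ _) hcon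
    have key : ∀ (i₁ j₁ i₂ j₂ : ℕ) (x : X) (y : Y) (x' : X) (y' : Y),
        i₁ + 1 ≤ n + 1 → j₁ + 1 ≤ m + 1 → i₁ < i₂ → j₂ < j₁ →
        del < beta i₁ j₁ x y → del < beta i₂ j₂ x' y' →
        dist x x' ≤ D → dist y y' ≤ D → False := by
      intro i₁ j₁ i₂ j₂ x y x' y' hbn hbm hlt1 hlt2 hbeta1 hbeta2 hdx' hdy'
      have h1 : del < min (Phi (i₁ + 1) x) (Psi (j₁ + 1) y) - max (Phi i₁ x) (Psi j₁ y) := by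
        simp only [hbeta_def] at hbeta1
        rcases le_or_gt (min (Phi (i₁ + 1) x) (Psi (j₁ + 1) y) - max (Phi i₁ x) (Psi j₁ y)) 0
          with h | h
        · rw [max_eq_left h] at hbeta1; linarith
        · rw [max_eq_right h.le] at hbeta1; exact hbeta1
      have e1 : Phi (i₁ + 1) x - Phi (i₁ + 1) x' ≤ EX := hPhi_lip _ _ _ hbn hdx'
      have e2 : Phi i₁ x' - Phi i₁ x ≤ EX :=
        hPhi_lip _ _ _ (by omega) (by rw [dist_comm]; exact hdx')
      have e3 : Psi (j₁ + 1) y - Psi (j₁ + 1) y' ≤ EY := hPsi_lip _ _ _ hbm hdy'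
      have e4 : Psi j₁ y' - Psi j₁ y ≤ EY :=
        hPsi_lip _ _ _ (by omega) (by rw [dist_comm]; exact hdy')
      have hmin1 : min (Phi (i₁ + 1) x) (Psi (j₁ + 1) y) - (EX + EY)
          ≤ min (Phi (i₁ + 1) x') (Psi (j₁ + 1) y') := by
        apply le_min
        · linarith [min_le_left (Phi (i₁ + 1) x) (Psi (j₁ + 1) y)]
        · linarith [min_le_right (Phi (i₁ + 1) x) (Psi (j₁ + 1) y)]
      have hmax1 : max (Phi i₁ x') (Psi j₁ y') ≤ max (Phi i₁ x) (Psi j₁ y) + (EX + EY) := by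
        apply max_le
        · linarith [le_max_left (Phi i₁ x) (Psi j₁ y)]
        · linarith [le_max_right (Phi i₁ x) (Psi j₁ y)]
      have h3 : del < min (Phi (i₂ + 1) x') (Psi (j₂ + 1) y') - max (Phi i₂ x') (Psi j₂ y') := by
        simp only [hbeta_def] at hbeta2
        rcases le_or_gt (min (Phi (i₂ + 1) x') (Psi (j₂ + 1) y') - max (Phi i₂ x') (Psi j₂ y')) 0
          with h | h
        · rw [max_eq_left h] at hbeta2; linarith
        · rw [max_eq_right h.le] at hbeta2; exact hbeta2
      have l1 : Psi j₁ y' < Phi (i₁ + 1) x' := by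
        have a1 : Psi j₁ y' ≤ max (Phi i₁ x') (Psi j₁ y') := le_max_right _ _
        have a2 : min (Phi (i₁ + 1) x') (Psi (j₁ + 1) y') ≤ Phi (i₁ + 1) x' := min_le_left _ _
        have h2 : 0 < min (Phi (i₁ + 1) x') (Psi (j₁ + 1) y') - max (Phi i₁ x') (Psi j₁ y') := by
          linarith [hEdel]
        linarith
      have l2 : Phi i₂ x' < Psi (j₂ + 1) y' := by
        have a1 : Phi i₂ x' ≤ max (Phi i₂ x') (Psi j₂ y') := le_max_left _ _
        have a2 : min (Phi (i₂ + 1) x') (Psi (j₂ + 1) y') ≤ Psi (j₂ + 1) y' := min_le_right _ _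
        linarith
      have m1 : Phi (i₁ + 1) x' ≤ Phi i₂ x' := hPhi_mono (by omega) x'
      have m2 : Psi (j₂ + 1) y' ≤ Psi j₁ y' := hPsi_mono (by omega) y'
      linarith
    have hiN : i < n + 1 := hSUlt i u hu
    have hjM : j < m + 1 := hSVlt j v hv
    have hiN' : i' < n + 1 := hSUlt i' u' hu'
    have hjM' : j' < m + 1 := hSVlt j' v' hv'
    have hsums : i + j = i' + j' := by omega
    rcases Nat.lt_trichotomy i i' with hlt | heq | hlt
    · exact key i j i' j' p.1 p.2 q.1 q.2 (by omega) (by omega) hlt (by omega) hpb hqb hdx hdy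
    · have hjj : j = j' := by omega
      subst heq
      subst hjj
      have huu : u = u' := by
        by_contra hneu
        obtain ⟨pu, hpum, hpud⟩ := (infDist_lt_iff (hSUne _ _ hu)).mp hpu
        obtain ⟨qu, hqum, hqud⟩ := (infDist_lt_iff (hSUne _ _ hu')).mp hqu
        have hsep := hSUsep i u u' hu hu' hneu pu hpum qu hqum
        have h5 := dist_triangle4 pu p.1 q.1 qu
        have h8 : dist pu p.1 = dist p.1 pu := dist_comm _ _
        linarith
      have hvv : v = v' := by
        by_contra hnev
        obtain ⟨pv, hpvm, hpvd⟩ := (infDist_lt_iff (hSVne _ _ hv)).mp hpv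
        obtain ⟨qv, hqvm, hqvd⟩ := (infDist_lt_iff (hSVne _ _ hv')).mp hqv
        have hsep := hSVsep j v v' hv hv' hnev pv hpvm qv hqvm
        have h5 := dist_triangle4 pv p.2 q.2 qv
        have h8 : dist pv p.2 = dist p.2 pv := dist_comm _ _
        linarith
      exact hne (by rw [huu, hvv])
    · exact key i' j' i j q.1 q.2 p.1 p.2 (by omega) (by omega) hlt (by omega) hqb hpb
        (by rw [dist_comm]; exact hdx) (by rw [dist_comm]; exact hdy)

/-- For metric spaces `X` and `Y`, `asdim (X × Y) ≤ asdim X + asdim Y`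
(product metric). -/
theorem stmt6 {X Y : Type*} [PseudoMetricSpace X] [PseudoMetricSpace Y] :
    asdim (X × Y) ≤ asdim X + asdim Y := by
  classical
  by_cases hX : ∃ n, AsdimLE (fun x y : X => dist x y) n
  · by_cases hY : ∃ m, AsdimLE (fun x y : Y => dist x y) m
    · have h1 : asdim (X × Y) ≤ ((Nat.find hX + Nat.find hY : ℕ) : ℕ∞) := by
        apply iInf₂_le_of_le (Nat.find hX + Nat.find hY)
          (asdimLE_prod (Nat.find_spec hX) (Nat.find_spec hY))
        exact le_rfl
      have h2 : ((Nat.find hX : ℕ) : ℕ∞) ≤ asdim X :=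
        le_iInf fun n => le_iInf fun hn => by exact_mod_cast Nat.find_min' hX hn
      have h3 : ((Nat.find hY : ℕ) : ℕ∞) ≤ asdim Y :=
        le_iInf fun n => le_iInf fun hn => by exact_mod_cast Nat.find_min' hY hn
      calc asdim (X × Y) ≤ ((Nat.find hX + Nat.find hY : ℕ) : ℕ∞) := h1
        _ = ((Nat.find hX : ℕ) : ℕ∞) + ((Nat.find hY : ℕ) : ℕ∞) := by push_cast; rfl
        _ ≤ asdim X + asdim Y := add_le_add h2 h3
    · have htop : asdim Y = ⊤ := by
        push_neg at hY
        simp only [asdim, asdimD]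
        rw [iInf_eq_top]
        intro k
        exact iInf_neg (hY k)
      rw [htop, add_top]
      exact le_top
  · have htop : asdim X = ⊤ := by
      push_neg at hX
      simp only [asdim, asdimD]
      rw [iInf_eq_top]
      intro k
      exact iInf_neg (hX k)
    rw [htop, top_add]
    exact le_top
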